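/- arXiv:2204.09105 — 5 statements merged into one kernel-verified Lean document; each statement's English description precedes it below -/
import Mathlib

section
/- Let P and Q be probability measures on ℝ^d. Suppose π ∈ Π(P,Q) is a coupling such that π is absolutely continuous with respect to P×Q with density dπ/d(P×Q)(x,y) = exp(f(x) + g(y) − ½‖x−y‖²) for P×Q-almost every (x,y), for some f ∈ L¹(P) and g ∈ L¹(Q). Then π is the unique minimizer of the entropic transportation problem defining S(P,Q); that is, for every π' ∈ Π(P,Q) with π' ≠ π, ∫ ½‖x−y‖² dπ(x,y) + H(π|P×Q) < ∫ ½‖x−y‖² dπ'(x,y) + H(π'|P×Q). -/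
open MeasureTheory ProbabilityTheory Filter
open scoped ENNReal NNReal Topology

noncomputable section

/-- Euclidean space `ℝ^d`. -/
abbrev Euc (d : ℕ) := EuclideanSpace ℝ (Fin d)

/-- `π` is a coupling of `P` and `Q`. -/
def IsCoupling {d : ℕ} (P Q : Measure (Euc d)) (π : Measure (Euc d × Euc d)) : Prop :=
  π.map Prod.fst = P ∧ π.map Prod.snd = Q

open Classical in
/-- Relative entropy `H(α | β)`: `∫ log (dα/dβ) dα` when `α ≪ β` (and the log-density is
`α`-integrable), and `∞` otherwise. -/
def relEnt {E : Type*} [MeasurableSpace E] (α β : Measure E) : ℝ≥0∞ :=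
  if α ≪ β ∧ Integrable (fun x => Real.log (α.rnDeriv β x).toReal) α
  then ENNReal.ofReal (∫ x, Real.log (α.rnDeriv β x).toReal ∂α) else ∞

/-- Entropic transportation cost
`S_ε(P,Q) = inf_{π ∈ Π(P,Q)} ∫ ½‖x−y‖² dπ + ε H(π | P×Q)`. -/
def entCost {d : ℕ} (ε : ℝ) (P Q : Measure (Euc d)) : ℝ≥0∞ :=
  ⨅ (π : Measure (Euc d × Euc d)) (_ : IsCoupling P Q π),
    (∫⁻ p, ENNReal.ofReal ((1/2) * ‖p.1 - p.2‖^2) ∂π) + ENNReal.ofReal ε * relEnt π (P.prod Q)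

/-- `P` is `σ2`-subgaussian: `∫ exp(‖x‖²/(2 d σ2)) dP ≤ 2`. -/
def IsSubG (d : ℕ) (σ2 : ℝ) (P : Measure (Euc d)) : Prop :=
  ∫⁻ x, ENNReal.ofReal (Real.exp (‖x‖^2 / (2 * d * σ2))) ∂P ≤ 2

/-- Empirical measure `P_n = (1/n) ∑_{i<n} δ_{X i ω}`. -/
def empMeas {Ωs : Type*} [MeasurableSpace Ωs] {d : ℕ} (X : ℕ → Ωs → Euc d) (n : ℕ) (ω : Ωs) :
    Measure (Euc d) :=
  (n : ℝ≥0∞)⁻¹ • ∑ i ∈ Finset.range n, Measure.dirac (X i ω)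

/-- `(f, g)` is a pair of optimal entropic potentials for `(P,Q)` at regularization `ε`. -/
def IsPotPair {d : ℕ} (ε : ℝ) (P Q : Measure (Euc d)) (f g : Euc d → ℝ) : Prop :=
  Integrable f P ∧ Integrable g Q ∧
  (∀ x, ∫ y, Real.exp ((f x + g y - (1/2) * ‖x - y‖^2) / ε) ∂Q = 1) ∧
  (∀ y, ∫ x, Real.exp ((f x + g y - (1/2) * ‖x - y‖^2) / ε) ∂P = 1)

/-- Directional derivative in direction `v`. -/
def dirD {F : Type*} [NormedAddCommGroup F] [NormedSpace ℝ F] (v : F) (f : F → ℝ) : F → ℝ :=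
  fun x => fderiv ℝ f x v

/-- Multi-index partial derivative `D^α f` on `ℝ^d`. -/
def mderiv {d : ℕ} (α : Fin d → ℕ) (f : Euc d → ℝ) : Euc d → ℝ :=
  (List.finRange d).foldr (fun i g => (dirD (EuclideanSpace.single i (1:ℝ)))^[α i] g) f

/-- The (finite) set of multi-indices on `ℝ^d` of order `i`. -/
def mIdx (d i : ℕ) : Finset (Fin d → ℕ) :=
  (Fintype.piFinset fun _ : Fin d => Finset.range (i+1)).filter fun α => (∑ j, α j) = i

/-- Sup of `|f|` over a set `A`. -/
def supOn {X : Type*} (A : Set X) (f : X → ℝ) : ℝ := sSup ((fun x => |f x|) '' A)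

/-- `C^s(A)` norm: `∑_{i=0}^s ∑_{|α| = i} ‖D^α f‖_{∞,A}`. -/
def CsNorm {d : ℕ} (s : ℕ) (A : Set (Euc d)) (f : Euc d → ℝ) : ℝ :=
  ∑ i ∈ Finset.range (s+1), ∑ α ∈ mIdx d i, supOn A (mderiv α f)

/-- Dual norm `‖ν − μ‖_{C^s_1(A)} = sup {∫ f dν − ∫ f dμ : ‖f‖_{C^s(A)} ≤ 1}`. -/
def dualNorm {d : ℕ} (s : ℕ) (A : Set (Euc d)) (μ ν : Measure (Euc d)) : ℝ :=
  sSup {r | ∃ f : Euc d → ℝ, CsNorm s A f ≤ 1 ∧ r = (∫ x, f x ∂ν) - ∫ x, f x ∂μ}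

/-- Multi-index partial derivative `D^{(α,β)} h` on `ℝ^d × ℝ^d` (α in the first variable,
β in the second). -/
def mderiv2 {d : ℕ} (α β : Fin d → ℕ) (f : Euc d × Euc d → ℝ) : Euc d × Euc d → ℝ :=
  (List.finRange d).foldr
    (fun i g => (dirD ((EuclideanSpace.single i (1:ℝ) : Euc d), (0 : Euc d)))^[α i] g)
    ((List.finRange d).foldr
      (fun i g => (dirD ((0 : Euc d), (EuclideanSpace.single i (1:ℝ) : Euc d)))^[β i] g) f)

/-- Pairs of multi-indices on `ℝ^d × ℝ^d` of total order `i`. -/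
def mIdx2 (d i : ℕ) : Finset ((Fin d → ℕ) × (Fin d → ℕ)) :=
  ((Fintype.piFinset fun _ : Fin d => Finset.range (i+1)) ×ˢ
    (Fintype.piFinset fun _ : Fin d => Finset.range (i+1))).filter
      fun p => (∑ j, p.1 j) + (∑ j, p.2 j) = i

/-- `C^s(A)` norm for functions on `ℝ^d × ℝ^d`. -/
def CsNorm2 {d : ℕ} (s : ℕ) (A : Set (Euc d × Euc d)) (f : Euc d × Euc d → ℝ) : ℝ :=
  ∑ i ∈ Finset.range (s+1), ∑ p ∈ mIdx2 d i, supOn A (mderiv2 p.1 p.2 f)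

/-- Weighted norm `‖f‖_s = sup |f|/(1+‖x‖³) + ∑_{i=1}^s ∑_{|α|=i} sup |D^α f|/(1+‖x‖^{s+1})`. -/
def wNorm {d : ℕ} (s : ℕ) (f : Euc d → ℝ) : ℝ :=
  sSup (Set.range fun x : Euc d => |f x| / (1 + ‖x‖^3)) +
    ∑ i ∈ Finset.range s, ∑ α ∈ mIdx d (i+1),
      sSup (Set.range fun x : Euc d => |mderiv α f x| / (1 + ‖x‖^(s+1)))

/-- The dual functional `L(a,b) = ∫ a dP + ∫ b dQ − ∫∫ e^{a(x)+b(y)−½‖x−y‖²} dP dQ + 1`. -/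
def dualL {d : ℕ} (P Q : Measure (Euc d)) (a b : Euc d → ℝ) : ℝ :=
  (∫ x, a x ∂P) + (∫ y, b y ∂Q) -
    (∫ p : Euc d × Euc d, Real.exp (a p.1 + b p.2 - (1/2) * ‖p.1 - p.2‖^2) ∂(P.prod Q)) + 1

/-- Sinkhorn divergence `D_ε(P,Q) = S_ε(P,Q) − ½ (S_ε(P,P) + S_ε(Q,Q))`. -/
def sinkhorn {d : ℕ} (ε : ℝ) (P Q : Measure (Euc d)) : ℝ :=
  (entCost ε P Q).toReal - (1/2) * ((entCost ε P P).toReal + (entCost ε Q Q).toReal)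

/-- The class `𝒢^s(C)`. -/
def memG (d s : ℕ) (C : ℝ) (f : Euc d → ℝ) : Prop :=
  ContDiff ℝ (s : ℕ∞) f ∧ (∀ x, |f x| ≤ C * (1 + ‖x‖^3)) ∧
  ∀ α : Fin d → ℕ, 1 ≤ (∑ j, α j) → (∑ j, α j) ≤ s →
    ∀ x, |mderiv α f x| ≤ C * (1 + ‖x‖^(s+1))

/-!
Write `c(x, y) = ½‖x - y‖²` and `ρ = P ⊗ Q`. Since `dπ/dρ = exp (f ⊕ g - c)`, for every coupling
`π'` the log-density splits as `log dπ'/dρ = log dπ'/dπ + f ⊕ g - c`, and `∫ f ⊕ g dπ'` equals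
`∫ f dP + ∫ g dQ` whatever the coupling. Hence the entropic objective at `π'` is
`∫ f dP + ∫ g dQ + H(π' | π)`, and Gibbs' inequality `H(π' | π) > 0` for `π' ≠ π` finishes.
-/

open InformationTheory

section GibbsMeasure

variable {α : Type*} [MeasurableSpace α]

lemma klDiv_eq_ofReal_integral_llr {μ ν : Measure α} [IsProbabilityMeasure μ]
    [IsProbabilityMeasure ν] (hμν : μ ≪ ν) (hint : Integrable (llr μ ν) μ) :
    klDiv μ ν = ENNReal.ofReal (∫ x, llr μ ν x ∂μ) := by
  simp [klDiv_of_ac_of_integrable hμν hint]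

lemma integral_llr_nonneg {μ ν : Measure α} [IsProbabilityMeasure μ] [IsProbabilityMeasure ν]
    (hμν : μ ≪ ν) (hint : Integrable (llr μ ν) μ) : 0 ≤ ∫ x, llr μ ν x ∂μ := by
  simpa using integral_llr_add_sub_measure_univ_nonneg hμν hint

lemma relEnt_eq_klDiv (μ ν : Measure α) [IsProbabilityMeasure μ] [IsProbabilityMeasure ν] :
    relEnt μ ν = klDiv μ ν := by
  by_cases h : μ ≪ ν ∧ Integrable (llr μ ν) μ
  · rw [relEnt, ← llr_def, if_pos h, klDiv_eq_ofReal_integral_llr h.1 h.2]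
  · rw [relEnt, ← llr_def, if_neg h, eq_comm, klDiv_eq_top_iff]
    exact fun hμν hint => h ⟨hμν, hint⟩

/-- `t * min (log t) 0 ≥ -1` because `t log t ≥ t - 1`. -/
lemma integrable_min_llr_zero {μ ν : Measure α} [IsFiniteMeasure μ] [IsFiniteMeasure ν]
    (hμν : μ ≪ ν) : Integrable (fun x => min (llr μ ν x) 0) μ := by
  rw [← integrable_rnDeriv_smul_iff hμν]
  refine (integrable_const (1 : ℝ)).mono' (by fun_prop) (ae_of_all _ fun x => ?_)
  have ht : 0 ≤ (μ.rnDeriv ν x).toReal := ENNReal.toReal_nonneg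
  have hlow := klFun_nonneg ht
  rw [klFun_apply] at hlow
  rw [smul_eq_mul, mul_min_of_nonneg _ _ ht, mul_zero, Real.norm_eq_abs, abs_le, llr_def]
  exact ⟨le_min (by linarith) (by norm_num), (min_le_right _ _).trans zero_le_one⟩

lemma integrable_llr_of_ae_le {μ ν : Measure α} [IsFiniteMeasure μ] [IsFiniteMeasure ν]
    (hμν : μ ≪ ν) {u : α → ℝ} (hu : Integrable u μ) (hle : ∀ᵐ x ∂μ, llr μ ν x ≤ u x) :
    Integrable (llr μ ν) μ := by
  refine (hu.abs.add (integrable_min_llr_zero hμν).abs).mono'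
    (stronglyMeasurable_llr μ ν).aestronglyMeasurable ?_
  filter_upwards [hle] with x hx
  rw [Pi.add_apply, Real.norm_eq_abs, abs_le]
  constructor <;> linarith [neg_abs_le (min (llr μ ν x) 0), min_le_left (llr μ ν x) 0,
    abs_nonneg (u x), le_abs_self (u x), abs_nonneg (min (llr μ ν x) 0)]

lemma llr_ae_eq_llr_add_llr {μ ν κ : Measure α} [SigmaFinite μ] [SigmaFinite ν] [SigmaFinite κ]
    (hμν : μ ≪ ν) (hνκ : ν ≪ κ) : llr μ κ =ᵐ[μ] fun x => llr μ ν x + llr ν κ x := by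
  filter_upwards [(hμν.trans hνκ).ae_le (Measure.rnDeriv_mul_rnDeriv hμν),
    Measure.rnDeriv_pos hμν, hμν.ae_le (Measure.rnDeriv_pos hνκ),
    hμν.ae_le (Measure.rnDeriv_lt_top μ ν), (hμν.trans hνκ).ae_le (Measure.rnDeriv_lt_top ν κ)]
    with x hmul hpos₁ hpos₂ hfin₁ hfin₂
  simp only [llr_def, ← hmul, Pi.mul_apply, ENNReal.toReal_mul]
  exact Real.log_mul (ENNReal.toReal_pos hpos₁.ne' hfin₁.ne).ne'
    (ENNReal.toReal_pos hpos₂.ne' hfin₂.ne).ne'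

variable {ρ π μ : Measure α} {u c : α → ℝ}

lemma llr_ae_eq_of_rnDeriv_eq_exp (hμρ : μ ≪ ρ)
    (hdens : (fun x => (π.rnDeriv ρ x).toReal) =ᵐ[ρ] fun x => Real.exp (u x - c x)) :
    llr π ρ =ᵐ[μ] fun x => u x - c x := by
  filter_upwards [hμρ.ae_le hdens] with x hx
  rw [llr_def]
  simp only [hx, Real.log_exp]

lemma absolutelyContinuous_of_rnDeriv_eq_exp [SigmaFinite π] [SigmaFinite ρ] (hπρ : π ≪ ρ)
    (hdens : (fun x => (π.rnDeriv ρ x).toReal) =ᵐ[ρ] fun x => Real.exp (u x - c x)) :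
    ρ ≪ π := by
  have hne : ∀ᵐ x ∂ρ, π.rnDeriv ρ x ≠ 0 := by
    filter_upwards [hdens] with x hx h0
    simp only [h0, ENNReal.toReal_zero] at hx
    exact (Real.exp_pos _).ne' hx.symm
  simpa [Measure.withDensity_rnDeriv_eq π ρ hπρ] using
    withDensity_absolutelyContinuous' (Measure.measurable_rnDeriv π ρ).aemeasurable hne

lemma integral_nonneg_of_rnDeriv_eq_exp [IsProbabilityMeasure ρ] [IsProbabilityMeasure π]
    (hc₀ : ∀ x, 0 ≤ c x) (hu : Integrable u π) (hπρ : π ≪ ρ)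
    (hdens : (fun x => (π.rnDeriv ρ x).toReal) =ᵐ[ρ] fun x => Real.exp (u x - c x)) :
    0 ≤ ∫ x, u x ∂π := by
  have hle : ∀ᵐ x ∂π, llr π ρ x ≤ u x := by
    filter_upwards [llr_ae_eq_of_rnDeriv_eq_exp hπρ hdens] with x hx
    linarith [hx, hc₀ x]
  have hint := integrable_llr_of_ae_le hπρ hu hle
  exact (integral_llr_nonneg hπρ hint).trans (integral_mono_ae hint hu hle)

/-- Gibbs variational identity: integrate `log dμ/dρ = log dμ/dπ + u - c` against `μ`. The
infinite cases match because the negative part of `log dμ/dρ` is always `μ`-integrable. -/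
theorem lintegral_add_klDiv_eq_of_rnDeriv_eq_exp [IsProbabilityMeasure ρ]
    [IsProbabilityMeasure π] [IsProbabilityMeasure μ] (hc : Measurable c) (hc₀ : ∀ x, 0 ≤ c x)
    (hu : Integrable u μ) (hu₀ : 0 ≤ ∫ x, u x ∂μ) (hπρ : π ≪ ρ)
    (hdens : (fun x => (π.rnDeriv ρ x).toReal) =ᵐ[ρ] fun x => Real.exp (u x - c x)) :
    ∫⁻ x, ENNReal.ofReal (c x) ∂μ + klDiv μ ρ = ENNReal.ofReal (∫ x, u x ∂μ) + klDiv μ π := by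
  by_cases hμρ : μ ≪ ρ
  swap
  · rw [klDiv_of_not_ac hμρ, klDiv_of_not_ac fun hμπ => hμρ (hμπ.trans hπρ), add_top, add_top]
  have hμπ : μ ≪ π := hμρ.trans (absolutelyContinuous_of_rnDeriv_eq_exp hπρ hdens)
  have hsplit : llr μ ρ =ᵐ[μ] fun x => llr μ π x + (u x - c x) := by
    filter_upwards [llr_ae_eq_llr_add_llr hμπ hπρ, llr_ae_eq_of_rnDeriv_eq_exp hμρ hdens]
      with x h₁ h₂
    rw [h₁, h₂]
  by_cases hint : Integrable (llr μ π) μ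
  · have hllr : Integrable (llr μ ρ) μ := by
      refine integrable_llr_of_ae_le hμρ (hint.add hu) ?_
      filter_upwards [hsplit] with x hx
      linarith [hx, hc₀ x, show (llr μ π + u) x = llr μ π x + u x from rfl]
    have hcint : Integrable c μ := ((hint.add hu).sub hllr).congr <| by
      filter_upwards [hsplit] with x hx
      simp only [Pi.add_apply, Pi.sub_apply, hx]
      ring
    rw [klDiv_eq_ofReal_integral_llr hμρ hllr, klDiv_eq_ofReal_integral_llr hμπ hint,
      ← ofReal_integral_eq_lintegral_ofReal hcint (ae_of_all _ hc₀),
      ← ENNReal.ofReal_add (integral_nonneg hc₀) (integral_llr_nonneg hμρ hllr),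
      ← ENNReal.ofReal_add hu₀ (integral_llr_nonneg hμπ hint), integral_congr_ae hsplit,
      integral_add (g := fun x => u x - c x) hint (hu.sub hcint), integral_sub hu hcint]
    ring_nf
  · rw [klDiv_of_not_integrable hint, add_top]
    by_cases hllr : Integrable (llr μ ρ) μ
    · have hcint : ¬ Integrable c μ := fun hcint => hint <| ((hllr.sub hu).add hcint).congr <| by
        filter_upwards [hsplit] with x hx
        simp only [Pi.add_apply, Pi.sub_apply, hx]
        ring
      rw [← lintegral_ofReal_ne_top_iff_integrable hc.aestronglyMeasurable
        (ae_of_all _ hc₀), not_not] at hcint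
      rw [hcint, top_add]
    · rw [klDiv_of_not_integrable hllr, add_top]

end GibbsMeasure

namespace IsCoupling

variable {d : ℕ} {P Q : Measure (Euc d)} {π : Measure (Euc d × Euc d)}

lemma isProbabilityMeasure [IsProbabilityMeasure P] (h : IsCoupling P Q π) :
    IsProbabilityMeasure π := by
  constructor
  have h1 : π.map Prod.fst Set.univ = 1 := by rw [h.1]; exact measure_univ
  rwa [Measure.map_apply measurable_fst MeasurableSet.univ, Set.preimage_univ] at h1

lemma integrable_fst_add_snd (h : IsCoupling P Q π) {f g : Euc d → ℝ} (hf : Integrable f P)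
    (hg : Integrable g Q) : Integrable (fun p => f p.1 + g p.2) π :=
  ((h.1 ▸ hf).comp_measurable measurable_fst).add ((h.2 ▸ hg).comp_measurable measurable_snd)

lemma integral_fst_add_snd (h : IsCoupling P Q π) {f g : Euc d → ℝ} (hf : Integrable f P)
    (hg : Integrable g Q) : ∫ p, (f p.1 + g p.2) ∂π = ∫ x, f x ∂P + ∫ y, g y ∂Q := by
  rw [integral_add ((h.1 ▸ hf).comp_measurable measurable_fst)
      ((h.2 ▸ hg).comp_measurable measurable_snd),
    ← integral_map measurable_fst.aemeasurable (h.1 ▸ hf.aestronglyMeasurable), h.1,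
    ← integral_map measurable_snd.aemeasurable (h.2 ▸ hg.aestronglyMeasurable), h.2]

end IsCoupling

/-- if a coupling `π` of `P` and `Q` has density
`dπ/d(P×Q)(x,y) = e^{f(x)+g(y)−½‖x−y‖²}` a.e. for some `f ∈ L¹(P)`, `g ∈ L¹(Q)`, then `π` is
the unique minimizer of the entropic transportation problem defining `S(P,Q)`. -/
theorem entropic_unique_minimizer {d : ℕ} (P Q : Measure (Euc d))
    [IsProbabilityMeasure P] [IsProbabilityMeasure Q]
    (π : Measure (Euc d × Euc d)) (hπ : IsCoupling P Q π)
    (f g : Euc d → ℝ) (hf : Integrable f P) (hg : Integrable g Q)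
    (hac : π ≪ P.prod Q)
    (hdens : (fun p => (π.rnDeriv (P.prod Q) p).toReal)
      =ᵐ[P.prod Q] fun p : Euc d × Euc d => Real.exp (f p.1 + g p.2 - (1/2) * ‖p.1 - p.2‖^2)) :
    ∀ π' : Measure (Euc d × Euc d), IsCoupling P Q π' → π' ≠ π →
      (∫⁻ p, ENNReal.ofReal ((1/2) * ‖p.1 - p.2‖^2) ∂π) + relEnt π (P.prod Q) <
        (∫⁻ p, ENNReal.ofReal ((1/2) * ‖p.1 - p.2‖^2) ∂π') + relEnt π' (P.prod Q) := by
  intro π' hπ' hne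
  have := hπ.isProbabilityMeasure
  have := hπ'.isProbabilityMeasure
  have hF₀ : 0 ≤ ∫ x, f x ∂P + ∫ y, g y ∂Q := hπ.integral_fst_add_snd hf hg ▸
    integral_nonneg_of_rnDeriv_eq_exp (fun p => by positivity)
      (hπ.integrable_fst_add_snd hf hg) hac hdens
  have hobjective : ∀ μ, IsCoupling P Q μ →
      (∫⁻ p, ENNReal.ofReal ((1/2) * ‖p.1 - p.2‖^2) ∂μ) + relEnt μ (P.prod Q) =
        ENNReal.ofReal (∫ x, f x ∂P + ∫ y, g y ∂Q) + klDiv μ π := by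
    intro μ hμ
    have := hμ.isProbabilityMeasure
    rw [relEnt_eq_klDiv, ← hμ.integral_fst_add_snd hf hg]
    exact lintegral_add_klDiv_eq_of_rnDeriv_eq_exp (by fun_prop) (fun p => by positivity)
      (hμ.integrable_fst_add_snd hf hg) (hμ.integral_fst_add_snd hf hg ▸ hF₀) hac hdens
  rw [hobjective π hπ, hobjective π' hπ', klDiv_self, add_zero]
  exact ENNReal.lt_add_right ENNReal.ofReal_ne_top (klDiv_eq_zero_iff.not.2 hne)
end
end

section
/- Let Ω ⊂ ℝ^d be compact with diameter D_Ω, let P and Q be probability measures supported in Ω, and let (f*, g*) be a pair of optimal entropic potentials for (P,Q). Then: (i) for every x ∈ Ω, min_{y∈Ω} {½‖x−y‖² − g*(y)} ≤ f*(x) ≤ max_{y∈Ω} {½‖x−y‖² − g*(y)}; and (ii) f* is D_Ω-Lipschitz on Ω. -/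
open MeasureTheory ProbabilityTheory Filter
open scoped ENNReal NNReal Topology

noncomputable section

/-!
Both halves come from comparing integrands in the Schrödinger equation
`∫ exp (f x + g y - ½‖x - y‖²) dQ(y) = 1`. For `x, x', y ∈ Ω` the costs `½‖x - y‖²` and
`½‖x' - y‖²` differ by at most `D_Ω ‖x - x'‖`, so the two equations at `x` and `x'` force
`|f x - f x'| ≤ D_Ω ‖x - x'‖`. Bounding `½‖x - y‖² - g y` between its infimum and supremum over
`Ω ∋ y` and comparing with the constant `0` (the equation for the probability measure `Q`)
gives the sandwich; the infimum and supremum are finite because `g`, a potential of the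
swapped pair `(Q, P)`, is Lipschitz and hence continuous on the compact set `Ω`.
-/

section IntegralExp

variable {α : Type*} [MeasurableSpace α] {μ : Measure α} {F G : α → ℝ} {a : ℝ}

theorem nonneg_of_integral_exp_eq_one_of_ae_le_add (hF : ∫ y, Real.exp (F y) ∂μ = 1)
    (hG : ∫ y, Real.exp (G y) ∂μ = 1) (h : ∀ᵐ y ∂μ, F y ≤ G y + a) : 0 ≤ a := by
  have hle : ∫ y, Real.exp (F y) ∂μ ≤ ∫ y, Real.exp a * Real.exp (G y) ∂μ := by
    refine integral_mono_ae (integrable_of_integral_eq_one hF)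
      ((integrable_of_integral_eq_one hG).const_mul _) ?_
    filter_upwards [h] with y hy
    rw [← Real.exp_add]
    exact Real.exp_le_exp.mpr (by linarith)
  rw [hF, integral_const_mul, hG, mul_one] at hle
  exact Real.one_le_exp_iff.mp hle

variable [IsProbabilityMeasure μ]

theorem nonneg_of_integral_exp_eq_one_of_ae_le (hF : ∫ y, Real.exp (F y) ∂μ = 1)
    (h : ∀ᵐ y ∂μ, F y ≤ a) : 0 ≤ a :=
  nonneg_of_integral_exp_eq_one_of_ae_le_add (G := 0) hF (by simp) (by simpa using h)

theorem nonpos_of_integral_exp_eq_one_of_ae_ge (hF : ∫ y, Real.exp (F y) ∂μ = 1)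
    (h : ∀ᵐ y ∂μ, a ≤ F y) : a ≤ 0 := by
  have := nonneg_of_integral_exp_eq_one_of_ae_le_add (F := 0) (a := -a) (by simp) hF
    (by filter_upwards [h] with y hy; simp only [Pi.zero_apply]; linarith)
  linarith

end IntegralExp

theorem half_sq_dist_sub_half_sq_dist_le {X : Type*} [PseudoMetricSpace X] {s : Set X}
    (hs : Bornology.IsBounded s) {a b c : X} (ha : a ∈ s) (hb : b ∈ s) (hc : c ∈ s) :
    (1/2) * dist a b ^ 2 - (1/2) * dist a c ^ 2 ≤ Metric.diam s * dist b c := by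
  have hab := Metric.dist_le_diam_of_mem hs ha hb
  have hac := Metric.dist_le_diam_of_mem hs ha hc
  have htri : dist a b ≤ dist a c + dist b c := by
    linarith [dist_triangle a c b, dist_comm c b]
  nlinarith [dist_nonneg (x := a) (y := b), dist_nonneg (x := a) (y := c),
    dist_nonneg (x := b) (y := c)]

namespace IsPotPair

variable {d : ℕ} {ε : ℝ} {P Q : Measure (Euc d)} {f g : Euc d → ℝ}

theorem symm (h : IsPotPair ε P Q f g) : IsPotPair ε Q P g f := by
  obtain ⟨hf, hg, hfst, hsnd⟩ := h
  exact ⟨hg, hf, fun y => by simpa only [add_comm (g y), norm_sub_rev y] using hsnd y,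
    fun x => by simpa only [add_comm (g _), norm_sub_rev _ x] using hfst x⟩

theorem sub_le_diam_mul {Ω : Set (Euc d)} (hΩ : Bornology.IsBounded Ω) (hQ : Q Ωᶜ = 0)
    (hε : 0 < ε) (h : IsPotPair ε P Q f g) {x x' : Euc d} (hx : x ∈ Ω) (hx' : x' ∈ Ω) :
    f x - f x' ≤ Metric.diam Ω * ‖x - x'‖ := by
  have hQΩ : ∀ᵐ y ∂Q, y ∈ Ω := ae_iff.mpr hQ
  have hnonneg := nonneg_of_integral_exp_eq_one_of_ae_le_add (h.2.2.1 x') (h.2.2.1 x)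
    (a := (f x' - f x + Metric.diam Ω * ‖x - x'‖) / ε) <| by
      filter_upwards [hQΩ] with y hy
      rw [← add_div]
      refine div_le_div_of_nonneg_right ?_ hε.le
      have := half_sq_dist_sub_half_sq_dist_le hΩ hy hx hx'
      simp only [dist_eq_norm, norm_sub_rev y] at this
      linarith
  linarith [(le_div_iff₀ hε).mp hnonneg]

theorem abs_sub_le_diam_mul {Ω : Set (Euc d)} (hΩ : Bornology.IsBounded Ω) (hQ : Q Ωᶜ = 0)
    (hε : 0 < ε) (h : IsPotPair ε P Q f g) {x x' : Euc d} (hx : x ∈ Ω) (hx' : x' ∈ Ω) :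
    |f x - f x'| ≤ Metric.diam Ω * ‖x - x'‖ :=
  abs_sub_le_iff.mpr ⟨h.sub_le_diam_mul hΩ hQ hε hx hx',
    norm_sub_rev x x' ▸ h.sub_le_diam_mul hΩ hQ hε hx' hx⟩

theorem continuousOn_snd {Ω : Set (Euc d)} (hΩ : Bornology.IsBounded Ω) (hP : P Ωᶜ = 0)
    (hε : 0 < ε) (h : IsPotPair ε P Q f g) : ContinuousOn g Ω :=
  LipschitzOnWith.continuousOn (K := (Metric.diam Ω).toNNReal) <|
    LipschitzOnWith.of_dist_le_mul fun y hy y' hy' => by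
      rw [Real.coe_toNNReal _ Metric.diam_nonneg, Real.dist_eq, dist_eq_norm]
      exact h.symm.abs_sub_le_diam_mul hΩ hP hε hy hy'

end IsPotPair

theorem potential_sandwich_and_lipschitz_general {d : ℕ} (Ω : Set (Euc d)) (hΩ : IsCompact Ω)
    (P Q : Measure (Euc d)) [IsProbabilityMeasure Q]
    (hP : P Ωᶜ = 0) (hQ : Q Ωᶜ = 0)
    (f g : Euc d → ℝ) (hpot : IsPotPair 1 P Q f g) :
    (∀ x ∈ Ω,
      sInf ((fun y => (1/2) * ‖x - y‖^2 - g y) '' Ω) ≤ f x ∧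
      f x ≤ sSup ((fun y => (1/2) * ‖x - y‖^2 - g y) '' Ω)) ∧
    (∀ x ∈ Ω, ∀ x' ∈ Ω, |f x - f x'| ≤ Metric.diam Ω * ‖x - x'‖) := by
  refine ⟨fun x _ => ?_, fun x hx x' hx' =>
    hpot.abs_sub_le_diam_mul hΩ.isBounded hQ one_pos hx hx'⟩
  set S := (fun y => (1/2) * ‖x - y‖^2 - g y) '' Ω
  have hcpt : IsCompact S :=
    hΩ.image_of_continuousOn <|
      (by fun_prop : Continuous fun y => (1/2) * ‖x - y‖^2).continuousOn.sub
        (hpot.continuousOn_snd hΩ.isBounded hP one_pos)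
  have hQΩ : ∀ᵐ y ∂Q, y ∈ Ω := ae_iff.mpr hQ
  have hfst : ∀ x, ∫ y, Real.exp (f x + g y - (1/2) * ‖x - y‖^2) ∂Q = 1 := fun x => by
    simpa only [div_one] using hpot.2.2.1 x
  constructor
  · have := nonneg_of_integral_exp_eq_one_of_ae_le (hfst x) (a := f x - sInf S) <| by
      filter_upwards [hQΩ] with y hy
      linarith [csInf_le hcpt.bddBelow ⟨y, hy, rfl⟩]
    linarith
  · have := nonpos_of_integral_exp_eq_one_of_ae_ge (hfst x) (a := f x - sSup S) <| by
      filter_upwards [hQΩ] with y hy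
      linarith [le_csSup hcpt.bddAbove ⟨y, hy, rfl⟩]
    linarith

/-- for compactly supported `P, Q` and optimal entropic potentials `(f*,g*)`,
`min_{y∈Ω} {½‖x−y‖² − g*(y)} ≤ f*(x) ≤ max_{y∈Ω} {½‖x−y‖² − g*(y)}` on `Ω`, and `f*` is
`D_Ω`-Lipschitz on `Ω`. -/
theorem potential_sandwich_and_lipschitz {d : ℕ} (Ω : Set (Euc d)) (hΩ : IsCompact Ω)
    (P Q : Measure (Euc d)) [IsProbabilityMeasure P] [IsProbabilityMeasure Q]
    (hP : P Ωᶜ = 0) (hQ : Q Ωᶜ = 0)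
    (f g : Euc d → ℝ) (hpot : IsPotPair 1 P Q f g) :
    (∀ x ∈ Ω,
      sInf ((fun y => (1/2) * ‖x - y‖^2 - g y) '' Ω) ≤ f x ∧
      f x ≤ sSup ((fun y => (1/2) * ‖x - y‖^2 - g y) '' Ω)) ∧
    (∀ x ∈ Ω, ∀ x' ∈ Ω, |f x - f x'| ≤ Metric.diam Ω * ‖x - x'‖) :=
  potential_sandwich_and_lipschitz_general Ω hΩ P Q hP hQ f g hpot
end
end

section
/- For every dimension d and every multi-index α with |α| ≥ 1 there exists a constant C_{d,α} depending only on d and α such that: for every compact set Ω ⊂ ℝ^d with 0 ∈ Ω and diameter D_Ω, all probability measures P, Q supported in Ω, and any pair (f*, g*) of optimal entropic potentials for (P,Q), the function f* is C^∞ on Ω and ‖D^α f*‖_{∞,Ω} ≤ C_{d,α} (1 + D_Ω^{|α|}). -/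
open MeasureTheory ProbabilityTheory Filter
open scoped ENNReal NNReal Topology

noncomputable section

open Real
open scoped RealInnerProductSpace ContDiff

/-!
With `ρ = e^{g - ½‖·‖²} Q`, the Schrödinger system gives
`f(x) = ½‖x‖² - log ∫ e^{⟪y, x⟫} dρ(y)`, where `ρ` is a nonzero finite measure supported in the
ball of radius `D_Ω` around `0 ∈ Ω`. Differentiating under the integral sign, every partial
derivative of `f` of order `k ≥ 1` is a polynomial, determined by the multi-index alone, in the
coordinates of `x` and the tilted moments `∫ y^β e^{⟪y, x⟫} dρ / ∫ e^{⟪y, x⟫} dρ`. On `Ω` a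
coordinate is at most `D_Ω` and a tilted moment of order `|β|` at most `D_Ω^{|β|}` in absolute
value, so the derivative is bounded by a constant times `max 1 D_Ω ^ k ≤ 1 + D_Ω ^ k`. The
polynomials are kept as syntax (`MomentExpr`) so that the constant does not depend on `P`, `Q`, `Ω`.
-/

namespace EntropicOT

variable {d : ℕ}

lemma max_one_pow_le {R : ℝ} (hR : 0 ≤ R) (k : ℕ) : max 1 R ^ k ≤ 1 + R ^ k := by
  rcases le_total R 1 with h | h
  · simp [max_eq_left h, hR]
  · simp [max_eq_right h]

def mono (β : Fin d → ℕ) (y : Euc d) : ℝ := ∏ j, y j ^ β j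

@[simp] lemma mono_zero (y : Euc d) : mono 0 y = 1 := by simp [mono]

lemma mono_add_single (β : Fin d → ℕ) (i : Fin d) (y : Euc d) :
    mono (β + Pi.single i 1) y = mono β y * y i := by
  simp only [mono, Pi.add_apply, pow_add, Finset.prod_mul_distrib, Pi.single_apply, pow_ite,
    pow_one, pow_zero, Finset.prod_ite_eq', Finset.mem_univ, if_true]

@[fun_prop]
lemma continuous_mono (β : Fin d → ℕ) : Continuous (mono β) := by
  unfold mono; fun_prop

lemma abs_mono_le {R : ℝ} {y : Euc d} (hy : ‖y‖ ≤ R) (β : Fin d → ℕ) :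
    |mono β y| ≤ R ^ ∑ j, β j := by
  rw [mono, Finset.abs_prod, ← Finset.prod_pow_eq_pow_sum]
  gcongr with j
  rw [abs_pow]
  exact pow_le_pow_left₀ (abs_nonneg _) ((PiLp.norm_apply_le y j).trans hy) _

def HasPartials (F : Euc d → ℝ) (F' : Fin d → Euc d → ℝ) : Prop :=
  ∀ x, HasFDerivAt F (∑ i, F' i x • EuclideanSpace.proj (𝕜 := ℝ) i) x

lemma hasPartials_of_hasFDerivAt {F : Euc d → ℝ} {F' : Fin d → Euc d → ℝ}
    {L : Euc d → Euc d →L[ℝ] ℝ} (hF : ∀ x, HasFDerivAt F (L x) x)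
    (hL : ∀ x i, L x (EuclideanSpace.single i 1) = F' i x) : HasPartials F F' := fun x => by
  convert hF x using 1
  apply ContinuousLinearMap.coe_injective
  refine (EuclideanSpace.basisFun (Fin d) ℝ).toBasis.ext fun i => ?_
  simp [hL]

namespace HasPartials

variable {F G : Euc d → ℝ} {F' G' : Fin d → Euc d → ℝ}

lemma differentiable (h : HasPartials F F') : Differentiable ℝ F :=
  fun x => (h x).differentiableAt

lemma fderiv_eq (h : HasPartials F F') :
    fderiv ℝ F = fun x => ∑ i, F' i x • EuclideanSpace.proj (𝕜 := ℝ) i :=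
  funext fun x => (h x).fderiv

lemma dirD_single (h : HasPartials F F') (i : Fin d) :
    dirD (EuclideanSpace.single i 1) F = F' i := by
  funext x
  simp [dirD, h.fderiv_eq]

lemma congr_partials (h : HasPartials F F') (hG : ∀ i x, F' i x = G' i x) : HasPartials F G' := by
  simpa only [show F' = G' from funext₂ hG] using h

lemma add (hF : HasPartials F F') (hG : HasPartials G G') : HasPartials (F + G) (F' + G') :=
  hasPartials_of_hasFDerivAt (fun x => (hF x).add (hG x)) (by simp)

lemma mul (hF : HasPartials F F') (hG : HasPartials G G') :
    HasPartials (F * G) (fun i => F' i * G + F * G' i) :=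
  hasPartials_of_hasFDerivAt (fun x => (hF x).mul (hG x)) (fun x i => by simp; ring)

lemma inv (hG : HasPartials G G') (hG0 : ∀ x, G x ≠ 0) :
    HasPartials (fun x => (G x)⁻¹) (fun i x => -G' i x / G x ^ 2) :=
  hasPartials_of_hasFDerivAt (fun x => (hasFDerivAt_inv (hG0 x)).comp x (hG x))
    (fun x i => by simp; ring)

end HasPartials

lemma hasPartials_const (c : ℝ) : HasPartials (fun _ : Euc d => c) (fun _ _ => 0) :=
  hasPartials_of_hasFDerivAt (fun _ => hasFDerivAt_const c _) (by simp)

lemma hasPartials_coord (j : Fin d) :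
    HasPartials (fun x : Euc d => x j) (fun i _ => if j = i then 1 else 0) :=
  hasPartials_of_hasFDerivAt (fun _ => (EuclideanSpace.proj (𝕜 := ℝ) j).hasFDerivAt)
    (by simp)

theorem contDiff_of_forall_hasPartials {𝓕 : Set (Euc d → ℝ)}
    (h𝓕 : ∀ F ∈ 𝓕, ∃ F' : Fin d → Euc d → ℝ, (∀ i, F' i ∈ 𝓕) ∧ HasPartials F F')
    {F : Euc d → ℝ} (hF : F ∈ 𝓕) : ContDiff ℝ ∞ F := by
  refine contDiff_infty.2 fun n => ?_
  induction n generalizing F with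
  | zero =>
    obtain ⟨F', -, h⟩ := h𝓕 F hF
    exact contDiff_zero.2 h.differentiable.continuous
  | succ n ih =>
    obtain ⟨F', hF', h⟩ := h𝓕 F hF
    refine contDiff_succ_iff_fderiv.2
      ⟨h.differentiable, fun hω => (WithTop.natCast_ne_top n hω).elim, ?_⟩
    rw [h.fderiv_eq]
    exact ContDiff.sum fun i _ => (ih (hF' i)).smul contDiff_const

section Moments

variable (μ : Measure (Euc d))

def expMoment (β : Fin d → ℕ) (x : Euc d) : ℝ := ∫ y, mono β y * exp ⟪y, x⟫ ∂μ

def tiltedMoment (β : Fin d → ℕ) (x : Euc d) : ℝ := expMoment μ β x / expMoment μ 0 x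

variable {μ} {R : ℝ}

lemma abs_mono_mul_exp_le (β : Fin d → ℕ) {x y : Euc d} {B : ℝ} (hx : ‖x‖ ≤ B) (hy : ‖y‖ ≤ R) :
    |mono β y * exp ⟪y, x⟫| ≤ R ^ (∑ j, β j) * exp (R * B) := by
  have hR : 0 ≤ R := (norm_nonneg y).trans hy
  rw [abs_mul, abs_of_pos (exp_pos _)]
  gcongr
  · exact abs_mono_le hy β
  · exact (real_inner_le_norm y x).trans (mul_le_mul hy hx (norm_nonneg x) hR)

variable [IsFiniteMeasure μ] (hμ : ∀ᵐ y ∂μ, ‖y‖ ≤ R)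
include hμ

lemma integrable_mono_mul_exp (β : Fin d → ℕ) (x : Euc d) :
    Integrable (fun y => mono β y * exp ⟪y, x⟫) μ :=
  .of_bound (by fun_prop) _
    (hμ.mono fun _ hy => abs_mono_mul_exp_le β le_rfl hy)

lemma expMoment_zero_pos [NeZero μ] (x : Euc d) : 0 < expMoment μ 0 x := by
  simpa [expMoment] using integral_exp_pos (by simpa using integrable_mono_mul_exp hμ 0 x)

lemma abs_expMoment_le (β : Fin d → ℕ) (x : Euc d) :
    |expMoment μ β x| ≤ R ^ (∑ j, β j) * expMoment μ 0 x := by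
  rw [expMoment, expMoment, ← integral_const_mul]
  refine (abs_integral_le_integral_abs).trans
    (integral_mono_ae (integrable_mono_mul_exp hμ β x).abs
      (by simpa using (integrable_mono_mul_exp hμ 0 x).const_mul (R ^ ∑ j, β j)) ?_)
  filter_upwards [hμ] with y hy
  rw [abs_mul, abs_of_pos (exp_pos _), mono_zero, one_mul]
  gcongr
  exact abs_mono_le hy β

lemma abs_tiltedMoment_le [NeZero μ] (β : Fin d → ℕ) (x : Euc d) :
    |tiltedMoment μ β x| ≤ R ^ ∑ j, β j := by
  rw [tiltedMoment, abs_div, abs_of_pos (expMoment_zero_pos hμ x),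
    div_le_iff₀ (expMoment_zero_pos hμ x)]
  exact abs_expMoment_le hμ β x

lemma hasPartials_expMoment (β : Fin d → ℕ) :
    HasPartials (expMoment μ β) (fun i => expMoment μ (β + Pi.single i 1)) := by
  set F' : Euc d → Euc d → Euc d →L[ℝ] ℝ := fun x y => (mono β y * exp ⟪y, x⟫) • innerSL ℝ y
  have hF'_le {x y : Euc d} {B : ℝ} (hx : ‖x‖ ≤ B) (hy : ‖y‖ ≤ R) :
      ‖F' x y‖ ≤ R ^ (∑ j, β j) * exp (R * B) * R := by
    have hR : 0 ≤ R := (norm_nonneg y).trans hy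
    rw [norm_smul, innerSL_apply_norm, Real.norm_eq_abs]
    exact mul_le_mul (abs_mono_mul_exp_le β hx hy) hy (norm_nonneg _) (by positivity)
  have hF'_int (x : Euc d) : Integrable (F' x) μ :=
    .of_bound (by fun_prop) _
      (hμ.mono fun _ hy => hF'_le le_rfl hy)
  refine hasPartials_of_hasFDerivAt (L := fun x => ∫ y, F' x y ∂μ) (fun x₀ => ?_) (fun x i => ?_)
  · refine hasFDerivAt_integral_of_dominated_of_fderiv_le (Metric.ball_mem_nhds x₀ one_pos)
      (.of_forall fun x => (integrable_mono_mul_exp hμ β x).aestronglyMeasurable)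
      (integrable_mono_mul_exp hμ β x₀) (hF'_int x₀).aestronglyMeasurable
      (bound := fun _ => R ^ (∑ j, β j) * exp (R * (‖x₀‖ + 1)) * R) ?_ (integrable_const _) ?_
    · filter_upwards [hμ] with y hy x hx
      refine hF'_le ?_ hy
      linarith [norm_le_norm_add_norm_sub' x x₀, mem_ball_iff_norm.1 hx]
    · refine .of_forall fun y x _ => ?_
      have := (((innerSL ℝ y).hasFDerivAt (x := x)).exp.const_mul (mono β y))
      simpa [F', real_inner_comm, smul_smul] using this
  · rw [ContinuousLinearMap.integral_apply (hF'_int x), expMoment]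
    congr 1 with y
    simp [F', mono_add_single, EuclideanSpace.inner_single_right]
    ring

lemma hasPartials_tiltedMoment [NeZero μ] (β : Fin d → ℕ) :
    HasPartials (tiltedMoment μ β) fun i x =>
      tiltedMoment μ (β + Pi.single i 1) x -
        tiltedMoment μ β x * tiltedMoment μ (Pi.single i 1) x := by
  have hW := (hasPartials_expMoment hμ β).mul
    ((hasPartials_expMoment hμ 0).inv fun x => (expMoment_zero_pos hμ x).ne')
  change HasPartials (expMoment μ β * fun x => (expMoment μ 0 x)⁻¹) _
  refine hW.congr_partials fun i x => ?_
  have := (expMoment_zero_pos hμ x).ne'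
  simp [tiltedMoment]
  field_simp
  ring

lemma hasPartials_potential [NeZero μ] :
    HasPartials (fun x => 1 / 2 * ‖x‖ ^ 2 - log (expMoment μ 0 x))
      (fun i x => x i - tiltedMoment μ (Pi.single i 1) x) := by
  refine hasPartials_of_hasFDerivAt
    (fun x => ((hasStrictFDerivAt_norm_sq x).hasFDerivAt.const_mul (1 / 2)).sub
      (HasFDerivAt.log (hasPartials_expMoment hμ 0 x) (expMoment_zero_pos hμ x).ne'))
    (fun x i => ?_)
  simp [tiltedMoment, div_eq_inv_mul, EuclideanSpace.inner_single_right]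

end Moments

inductive MomentExpr (d : ℕ)
  | const (c : ℝ)
  | coord (i : Fin d)
  | moment (β : Fin d → ℕ)
  | potential
  | add (e₁ e₂ : MomentExpr d)
  | mul (e₁ e₂ : MomentExpr d)

namespace MomentExpr

def sub (e₁ e₂ : MomentExpr d) : MomentExpr d := add e₁ (mul (const (-1)) e₂)

def eval (μ : Measure (Euc d)) : MomentExpr d → Euc d → ℝ
  | const c => fun _ => c
  | coord i => fun x => x i
  | moment β => tiltedMoment μ β
  | potential => fun x => 1 / 2 * ‖x‖ ^ 2 - log (expMoment μ 0 x)
  | add e₁ e₂ => e₁.eval μ + e₂.eval μ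
  | mul e₁ e₂ => e₁.eval μ * e₂.eval μ

def pderiv (i : Fin d) : MomentExpr d → MomentExpr d
  | const _ => const 0
  | coord j => const (if j = i then 1 else 0)
  | moment β => sub (moment (β + Pi.single i 1)) (mul (moment β) (moment (Pi.single i 1)))
  | potential => sub (coord i) (moment (Pi.single i 1))
  | add e₁ e₂ => add (e₁.pderiv i) (e₂.pderiv i)
  | mul e₁ e₂ => add (mul (e₁.pderiv i) e₂) (mul e₁ (e₂.pderiv i))

def multiDeriv (α : Fin d → ℕ) (e : MomentExpr d) : MomentExpr d :=
  (List.finRange d).foldr (fun i e => (pderiv i)^[α i] e) e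

/-- The exponent of the support radius in the bound `abs_eval_le`; `potential` is unbounded, and
degree `0` for it keeps `degree_pderiv_le` uniform. -/
def degree : MomentExpr d → ℕ
  | const _ => 0
  | coord _ => 1
  | moment β => ∑ j, β j
  | potential => 0
  | add e₁ e₂ => max e₁.degree e₂.degree
  | mul e₁ e₂ => e₁.degree + e₂.degree

def bound : MomentExpr d → ℝ
  | const c => |c|
  | coord _ => 1
  | moment _ => 1
  | potential => 0
  | add e₁ e₂ => e₁.bound + e₂.bound
  | mul e₁ e₂ => e₁.bound * e₂.bound

def PotentialFree : MomentExpr d → Prop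
  | potential => False
  | add e₁ e₂ => e₁.PotentialFree ∧ e₂.PotentialFree
  | mul e₁ e₂ => e₁.PotentialFree ∧ e₂.PotentialFree
  | _ => True

lemma eval_sub (μ : Measure (Euc d)) (e₁ e₂ : MomentExpr d) :
    (sub e₁ e₂).eval μ = e₁.eval μ - e₂.eval μ := by
  funext x
  simp [sub, eval]
  ring

lemma bound_nonneg : ∀ e : MomentExpr d, 0 ≤ e.bound
  | const c => abs_nonneg c
  | coord _ | moment _ => zero_le_one
  | potential => le_rfl
  | add e₁ e₂ => add_nonneg e₁.bound_nonneg e₂.bound_nonneg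
  | mul e₁ e₂ => mul_nonneg e₁.bound_nonneg e₂.bound_nonneg

lemma degree_pderiv_le (i : Fin d) : ∀ e : MomentExpr d, (e.pderiv i).degree ≤ e.degree + 1
  | const _ | coord _ | potential => by simp [pderiv, sub, degree]
  | moment β => by
    have : ∑ j, (β + Pi.single i 1 : Fin d → ℕ) j = ∑ j, β j + 1 := by
      simp [Finset.sum_add_distrib]
    have : ∑ j, (Pi.single i 1 : Fin d → ℕ) j = 1 := by simp
    simp only [pderiv, sub, degree]
    omega
  | add e₁ e₂ => by
    have := e₁.degree_pderiv_le i
    have := e₂.degree_pderiv_le i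
    simp only [pderiv, degree]
    omega
  | mul e₁ e₂ => by
    have := e₁.degree_pderiv_le i
    have := e₂.degree_pderiv_le i
    simp only [pderiv, degree]
    omega

lemma degree_multiDeriv_le (α : Fin d → ℕ) (e : MomentExpr d) :
    (e.multiDeriv α).degree ≤ e.degree + ∑ j, α j := by
  have h_iterate (i : Fin d) (n : ℕ) (e : MomentExpr d) :
      ((pderiv i)^[n] e).degree ≤ e.degree + n := by
    induction n with
    | zero => simp
    | succ n ih =>
      rw [Function.iterate_succ_apply']
      exact (degree_pderiv_le i _).trans (by omega)
  rw [multiDeriv, Fin.sum_univ_def]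
  induction List.finRange d with
  | nil => simp
  | cons i l ih =>
    rw [List.foldr_cons, List.map_cons, List.sum_cons]
    exact (h_iterate i _ _).trans (by omega)

lemma potentialFree_pderiv (i : Fin d) {e : MomentExpr d} (he : e.PotentialFree ∨ e = potential) :
    (e.pderiv i).PotentialFree := by
  rcases he with he | rfl
  · induction e with
    | potential => exact he.elim
    | add e₁ e₂ ih₁ ih₂ => exact ⟨ih₁ he.1, ih₂ he.2⟩
    | mul e₁ e₂ ih₁ ih₂ => exact ⟨⟨ih₁ he.1, he.2⟩, ⟨he.1, ih₂ he.2⟩⟩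
    | _ => simp [pderiv, sub, PotentialFree]
  · simp [pderiv, sub, PotentialFree]

lemma potentialFree_iterate_pderiv (i : Fin d) (n : ℕ) {e : MomentExpr d} (he : e.PotentialFree) :
    ((pderiv i)^[n] e).PotentialFree := by
  induction n with
  | zero => exact he
  | succ n ih =>
    rw [Function.iterate_succ_apply']
    exact potentialFree_pderiv i (.inl ih)

lemma potentialFree_multiDeriv_potential {α : Fin d → ℕ} (hα : 1 ≤ ∑ j, α j) :
    (potential.multiDeriv α).PotentialFree := by
  rw [Fin.sum_univ_def] at hα
  suffices ∀ l : List (Fin d), (l.foldr (fun i e => (pderiv i)^[α i] e) potential).PotentialFree ∨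
      ((l.map α).sum = 0 ∧ l.foldr (fun i e => (pderiv i)^[α i] e) potential = potential) by
    rcases this (List.finRange d) with h | h
    · exact h
    · omega
  intro l
  induction l with
  | nil => simp
  | cons i l ih =>
    rw [List.foldr_cons, List.map_cons, List.sum_cons]
    rcases hi : α i with _ | n
    · simpa using ih
    · left
      rw [Function.iterate_succ_apply]
      exact potentialFree_iterate_pderiv i n (potentialFree_pderiv i (ih.imp_right And.right))

section Semantics

variable {μ : Measure (Euc d)} [IsFiniteMeasure μ] [NeZero μ] {R : ℝ}
  (hμ : ∀ᵐ y ∂μ, ‖y‖ ≤ R)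
include hμ

lemma hasPartials_eval :
    ∀ e : MomentExpr d, HasPartials (e.eval μ) (fun i => (e.pderiv i).eval μ)
  | const c => hasPartials_const c
  | coord j => hasPartials_coord j
  | moment β => (hasPartials_tiltedMoment hμ β).congr_partials fun i x => by
      simp [pderiv, eval_sub, eval]
  | potential => (hasPartials_potential hμ).congr_partials fun i x => by
      simp [pderiv, eval_sub, eval]
  | add e₁ e₂ => (hasPartials_eval e₁).add (hasPartials_eval e₂)
  | mul e₁ e₂ => (hasPartials_eval e₁).mul (hasPartials_eval e₂)

lemma mderiv_eval (α : Fin d → ℕ) (e : MomentExpr d) :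
    mderiv α (e.eval μ) = (e.multiDeriv α).eval μ := by
  have h_iterate (i : Fin d) (n : ℕ) (e : MomentExpr d) :
      (dirD (EuclideanSpace.single i 1))^[n] (e.eval μ) = ((pderiv i)^[n] e).eval μ := by
    induction n with
    | zero => rfl
    | succ n ih =>
      rw [Function.iterate_succ_apply', Function.iterate_succ_apply', ih,
        (hasPartials_eval hμ _).dirD_single]
  rw [mderiv, multiDeriv]
  induction List.finRange d with
  | nil => rfl
  | cons i l ih => rw [List.foldr_cons, List.foldr_cons, ih, h_iterate]

lemma contDiff_eval (e : MomentExpr d) : ContDiff ℝ ∞ (e.eval μ) :=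
  contDiff_of_forall_hasPartials (𝓕 := Set.range fun e : MomentExpr d => e.eval μ)
    (by rintro _ ⟨e, rfl⟩; exact ⟨_, fun i => ⟨e.pderiv i, rfl⟩, hasPartials_eval hμ e⟩)
    ⟨e, rfl⟩

lemma abs_eval_le {x : Euc d} (hx : ‖x‖ ≤ R) :
    ∀ {e : MomentExpr d}, e.PotentialFree → |e.eval μ x| ≤ e.bound * max 1 R ^ e.degree
  | const c, _ => by simp [eval, bound, degree]
  | coord i, _ => by
      simpa [eval, bound, degree] using
        ((PiLp.norm_apply_le x i).trans hx).trans (le_max_right 1 R)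
  | moment β, _ => by
      simpa [eval, bound, degree] using (abs_tiltedMoment_le hμ β x).trans
        (pow_le_pow_left₀ ((norm_nonneg x).trans hx) (le_max_right 1 R) _)
  | add e₁ e₂, ⟨h₁, h₂⟩ => by
      calc |e₁.eval μ x + e₂.eval μ x|
          ≤ e₁.bound * max 1 R ^ e₁.degree + e₂.bound * max 1 R ^ e₂.degree :=
            (abs_add_le _ _).trans (add_le_add (abs_eval_le hx h₁) (abs_eval_le hx h₂))
        _ ≤ (e₁.bound + e₂.bound) * max 1 R ^ max e₁.degree e₂.degree := by
            have hM : 1 ≤ max 1 R := le_max_left 1 R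
            rw [add_mul]
            gcongr
            · exact e₁.bound_nonneg
            · exact le_max_left _ _
            · exact e₂.bound_nonneg
            · exact le_max_right _ _
  | mul e₁ e₂, ⟨h₁, h₂⟩ => by
      simp only [eval, bound, degree, Pi.mul_apply, abs_mul, pow_add]
      calc |e₁.eval μ x| * |e₂.eval μ x|
          ≤ (e₁.bound * max 1 R ^ e₁.degree) * (e₂.bound * max 1 R ^ e₂.degree) :=
            mul_le_mul (abs_eval_le hx h₁) (abs_eval_le hx h₂) (abs_nonneg _)
              ((abs_nonneg _).trans (abs_eval_le hx h₁))
        _ = _ := by ring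

lemma abs_mderiv_potential_le {α : Fin d → ℕ} (hα : 1 ≤ ∑ j, α j) {x : Euc d} (hx : ‖x‖ ≤ R) :
    |mderiv α (potential.eval μ) x| ≤
      ((potential.multiDeriv α).bound + 1) * (1 + R ^ ∑ j, α j) := by
  set e := potential.multiDeriv α
  have hR : 0 ≤ R := (norm_nonneg x).trans hx
  have hdeg : e.degree ≤ ∑ j, α j := (degree_multiDeriv_le α _).trans_eq (zero_add _)
  rw [mderiv_eval hμ]
  calc |e.eval μ x| ≤ e.bound * max 1 R ^ e.degree :=
        abs_eval_le hμ hx (potentialFree_multiDeriv_potential hα)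
    _ ≤ (e.bound + 1) * (1 + R ^ ∑ j, α j) :=
        mul_le_mul (le_add_of_nonneg_right zero_le_one)
          ((pow_le_pow_right₀ (le_max_left 1 R) hdeg).trans (max_one_pow_le hR _))
          (by positivity) (by linarith [e.bound_nonneg])

end Semantics

end MomentExpr

lemma supOn_le {X : Type*} {A : Set X} {F : X → ℝ} {c : ℝ} (hc : 0 ≤ c)
    (h : ∀ x ∈ A, |F x| ≤ c) : supOn A F ≤ c :=
  Real.sSup_le (by rintro _ ⟨x, hx, rfl⟩; exact h x hx) hc

theorem exists_measure_eq_potential {Q : Measure (Euc d)} {f g : Euc d → ℝ}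
    (hg : AEMeasurable g Q) (hfg : ∀ x, ∫ y, exp (f x + g y - 1 / 2 * ‖x - y‖ ^ 2) ∂Q = 1) :
    ∃ μ : Measure (Euc d), IsFiniteMeasure μ ∧ NeZero μ ∧ μ ≪ Q ∧
      f = fun x => 1 / 2 * ‖x‖ ^ 2 - log (expMoment μ 0 x) := by
  set ρ : Euc d → ℝ := fun y => exp (g y - 1 / 2 * ‖y‖ ^ 2)
  have hρ : Integrable ρ Q := by
    have h0 : Integrable (fun y => exp (f 0 + g y - 1 / 2 * ‖0 - y‖ ^ 2)) Q :=
      Integrable.of_integral_ne_zero (by rw [hfg 0]; exact one_ne_zero)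
    refine (h0.const_mul (exp (-f 0))).congr (.of_forall fun y => ?_)
    simp only [ρ, ← exp_add, zero_sub, norm_neg]
    ring_nf
  set μ := Q.withDensity fun y => ENNReal.ofReal (ρ y)
  have hμ (x : Euc d) : expMoment μ 0 x = exp (1 / 2 * ‖x‖ ^ 2 - f x) := by
    calc expMoment μ 0 x
        = ∫ y, exp (1 / 2 * ‖x‖ ^ 2 - f x) * exp (f x + g y - 1 / 2 * ‖x - y‖ ^ 2) ∂Q := by
          rw [expMoment, integral_withDensity_eq_integral_toReal_smul₀ (by fun_prop)
            (.of_forall fun _ => ENNReal.ofReal_lt_top)]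
          congr 1 with y
          simp only [ρ, mono_zero, one_mul, smul_eq_mul, ENNReal.toReal_ofReal (exp_pos _).le,
            ← exp_add, norm_sub_sq_real, real_inner_comm x y]
          ring_nf
      _ = exp (1 / 2 * ‖x‖ ^ 2 - f x) := by rw [integral_const_mul, hfg x, mul_one]
  refine ⟨μ, isFiniteMeasure_withDensity_ofReal hρ.2, ⟨fun h0 => ?_⟩,
    withDensity_absolutelyContinuous _ _, funext fun x => by rw [hμ, log_exp]; ring⟩
  simpa [expMoment, h0] using (exp_pos _).trans_eq (hμ 0).symm

end EntropicOT

open EntropicOT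

/-- for every `d` and multi-index `α` with `|α| ≥ 1` there is a constant
`C_{d,α}` such that for every compact `Ω ∋ 0`, compactly supported `P, Q` and optimal
entropic potentials `(f*,g*)`, `f*` is `C^∞` on `Ω` and
`‖D^α f*‖_{∞,Ω} ≤ C_{d,α} (1 + D_Ω^{|α|})`. -/
theorem potential_derivative_bounds (d : ℕ) (α : Fin d → ℕ) (hα : 1 ≤ ∑ j, α j) :
    ∃ C : ℝ, 0 < C ∧
      ∀ (Ω : Set (Euc d)), IsCompact Ω → (0 : Euc d) ∈ Ω →
        ∀ (P Q : Measure (Euc d)) [IsProbabilityMeasure P] [IsProbabilityMeasure Q],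
          P Ωᶜ = 0 → Q Ωᶜ = 0 →
          ∀ (f g : Euc d → ℝ), IsPotPair 1 P Q f g →
            ContDiffOn ℝ (⊤ : ℕ∞) f Ω ∧
            supOn Ω (mderiv α f) ≤ C * (1 + Metric.diam Ω ^ (∑ j, α j)) := by
  set C := (MomentExpr.potential.multiDeriv α).bound + 1
  have hC : 0 < C := by linarith [(MomentExpr.potential.multiDeriv α).bound_nonneg]
  refine ⟨C, hC, fun Ω hΩ h0 P Q _ _ _ hQ f g hfg => ?_⟩
  obtain ⟨-, hg, hfg, -⟩ := hfg
  obtain ⟨μ, _, _, hμQ, (rfl : f = MomentExpr.potential.eval μ)⟩ :=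
    exists_measure_eq_potential hg.aemeasurable (by simpa using hfg)
  have hΩD : ∀ x ∈ Ω, ‖x‖ ≤ Metric.diam Ω := fun x hx => by
    simpa using Metric.dist_le_diam_of_mem hΩ.isBounded hx h0
  have hμ : ∀ᵐ y ∂μ, ‖y‖ ≤ Metric.diam Ω :=
    hμQ.ae_le (Filter.mem_of_superset (mem_ae_iff.2 hQ) hΩD)
  exact ⟨(MomentExpr.potential.contDiff_eval hμ).contDiffOn,
    supOn_le (by positivity) fun x hx => MomentExpr.abs_mderiv_potential_le hμ hα (hΩD x hx)⟩
end
end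

section
/- Let Ω ⊂ ℝ^d be compact with diameter D_Ω and let P, Q be probability measures supported in Ω. If (f, g) is a pair of optimal entropic potentials for (P,Q) normalized so that ∫ g dQ = 0, then sup_{x∈Ω} |f(x)| ≤ ½ D_Ω² and sup_{y∈Ω} |g(y)| ≤ ½ D_Ω². -/
open MeasureTheory ProbabilityTheory Filter
open scoped ENNReal NNReal Topology

noncomputable section

/-! Integrating the Schrödinger equation `∫ exp(f(x) + g(y) − c(x,y)) dQ(y) = 1` against the
bounds `0 ≤ c ≤ ½ D_Ω²` on `Ω × Ω` pins `f(x)` to the interval `[−L_g, ½ D_Ω² − L_g]`, where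
`L_g = log ∫ e^g dQ`, and symmetrically for `g`. Integrating the bound on `g` against `Q` and using
`∫ g dQ = 0` gives `L_f ∈ [0, ½ D_Ω²]`; Jensen's inequality and the resulting bound `g ≤ ½ D_Ω²`
give `L_g ∈ [0, ½ D_Ω²]`. -/

open Real Set

section IntegralExp

variable {α : Type*} [MeasurableSpace α] {μ : Measure α} {φ k : α → ℝ} {u D : ℝ}

theorem integrable_exp_of_integrable_exp_add_sub (hφ : AEStronglyMeasurable φ μ)
    (hk : ∀ᵐ y ∂μ, k y ≤ D) (h : Integrable (fun y => exp (u + φ y - k y)) μ) :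
    Integrable (fun y => exp (φ y)) μ := by
  refine (h.const_mul (exp (D - u))).mono' (continuous_exp.comp_aestronglyMeasurable hφ) ?_
  filter_upwards [hk] with y hy
  rw [norm_of_nonneg (exp_pos _).le, ← exp_add]
  exact exp_le_exp.mpr (by linarith)

theorem add_log_integral_exp_mem_Icc (hφ : AEStronglyMeasurable φ μ)
    (hk : ∀ᵐ y ∂μ, k y ∈ Icc 0 D) (h : ∫ y, exp (u + φ y - k y) ∂μ = 1) :
    u + log (∫ y, exp (φ y) ∂μ) ∈ Icc 0 D := by
  have hint : Integrable (fun y => exp (u + φ y - k y)) μ :=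
    Integrable.of_integral_ne_zero (by rw [h]; exact one_ne_zero)
  have hexp := integrable_exp_of_integrable_exp_add_sub hφ (hk.mono fun _ hy => hy.2) hint
  set M := ∫ y, exp (φ y) ∂μ
  have hlower : 1 ≤ exp u * M := by
    rw [← h, ← integral_const_mul]
    refine integral_mono_ae hint (hexp.const_mul _) ?_
    filter_upwards [hk] with y hy
    rw [← exp_add]
    exact exp_le_exp.mpr (by linarith [hy.1])
  have hupper : exp (u - D) * M ≤ 1 := by
    rw [← h, ← integral_const_mul]
    refine integral_mono_ae (hexp.const_mul _) hint ?_
    filter_upwards [hk] with y hy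
    rw [← exp_add]
    exact exp_le_exp.mpr (by linarith [hy.2])
  have hM : 0 < M := pos_of_mul_pos_right (by linarith) (exp_pos u).le
  have hlog_lower := log_nonneg hlower
  have hlog_upper := log_nonpos (by positivity) hupper
  rw [log_mul (exp_pos _).ne' hM.ne', log_exp] at hlog_lower hlog_upper
  exact ⟨hlog_lower, by linarith⟩

theorem log_integral_exp_mem_Icc [IsProbabilityMeasure μ] (hφ : Integrable φ μ)
    (hφ_zero : ∫ y, φ y ∂μ = 0) (hφD : ∀ᵐ y ∂μ, φ y ≤ D) :
    log (∫ y, exp (φ y) ∂μ) ∈ Icc 0 D := by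
  have hexp : Integrable (fun y => exp (φ y)) μ := by
    refine Integrable.of_bound (continuous_exp.comp_aestronglyMeasurable hφ.1) (exp D) ?_
    filter_upwards [hφD] with y hy
    rw [norm_of_nonneg (exp_pos _).le]
    exact exp_le_exp.mpr hy
  have hjensen : 1 ≤ ∫ y, exp (φ y) ∂μ :=
    calc (1 : ℝ) = ∫ y, (φ y + 1) ∂μ := by
          rw [integral_add hφ (integrable_const 1), hφ_zero, integral_const, probReal_univ,
            one_smul, zero_add]
      _ ≤ ∫ y, exp (φ y) ∂μ :=
          integral_mono (hφ.add (integrable_const 1)) hexp fun y => add_one_le_exp (φ y)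
  have hbound : ∫ y, exp (φ y) ∂μ ≤ exp D := by
    calc ∫ y, exp (φ y) ∂μ ≤ ∫ _, exp D ∂μ :=
          integral_mono_ae hexp (integrable_const _) (hφD.mono fun _ hy => exp_le_exp.mpr hy)
      _ = exp D := by rw [integral_const, probReal_univ, one_smul]
  exact ⟨log_nonneg hjensen, (log_le_iff_le_exp (by linarith)).mpr hbound⟩

end IntegralExp

theorem half_norm_sub_sq_mem_Icc {E : Type*} [SeminormedAddCommGroup E] {s : Set E}
    (hs : Bornology.IsBounded s) {x y : E} (hx : x ∈ s) (hy : y ∈ s) :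
    (1/2) * ‖x - y‖ ^ 2 ∈ Icc 0 ((1/2) * Metric.diam s ^ 2) := by
  have hxy : ‖x - y‖ ≤ Metric.diam s := dist_eq_norm x y ▸ Metric.dist_le_diam_of_mem hs hx hy
  exact ⟨by positivity, by gcongr⟩

theorem abs_le_of_add_mem_Icc {a L D : ℝ} (ha : a + L ∈ Icc 0 D) (hL : L ∈ Icc 0 D) :
    |a| ≤ D :=
  abs_le.mpr ⟨by linarith [ha.1, hL.2], by linarith [ha.2, hL.1]⟩

theorem potential_uniform_bound_general {d : ℕ} (Ω : Set (Euc d)) (hΩ : IsCompact Ω)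
    (P Q : Measure (Euc d)) [IsProbabilityMeasure Q]
    (hP : P Ωᶜ = 0) (hQ : Q Ωᶜ = 0)
    (f g : Euc d → ℝ) (hpot : IsPotPair 1 P Q f g)
    (hnorm : ∫ y, g y ∂Q = 0) :
    (∀ x ∈ Ω, |f x| ≤ (1/2) * Metric.diam Ω ^ 2) ∧
    (∀ y ∈ Ω, |g y| ≤ (1/2) * Metric.diam Ω ^ 2) := by
  obtain ⟨hf_int, hg_int, hfx, hgy⟩ := hpot
  set D := (1/2) * Metric.diam Ω ^ 2
  have hΩP : ∀ᵐ x ∂P, x ∈ Ω := mem_ae_iff.mpr hP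
  have hΩQ : ∀ᵐ y ∂Q, y ∈ Ω := mem_ae_iff.mpr hQ
  have hcost : ∀ x ∈ Ω, ∀ y ∈ Ω, (1/2) * ‖x - y‖ ^ 2 ∈ Icc 0 D :=
    fun _ hx _ hy => half_norm_sub_sq_mem_Icc hΩ.isBounded hx hy
  have hf : ∀ x ∈ Ω, f x + log (∫ y, exp (g y) ∂Q) ∈ Icc 0 D :=
    fun x hx => add_log_integral_exp_mem_Icc (k := fun y => (1/2) * ‖x - y‖ ^ 2)
      hg_int.1 (hΩQ.mono fun y hy => hcost x hx y hy) (by simpa only [div_one] using hfx x)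
  have hg : ∀ y ∈ Ω, g y + log (∫ x, exp (f x) ∂P) ∈ Icc 0 D :=
    fun y hy => add_log_integral_exp_mem_Icc (k := fun x => (1/2) * ‖x - y‖ ^ 2)
      hf_int.1 (hΩP.mono fun x hx => hcost x hx y hy)
      (by simpa only [div_one, add_comm (f _) (g y)] using hgy y)
  have hLf : log (∫ x, exp (f x) ∂P) ∈ Icc 0 D := by
    have h := Convex.integral_mem (convex_Icc _ _) isClosed_Icc (hΩQ.mono hg)
      (hg_int.add (integrable_const _))
    rwa [integral_add hg_int (integrable_const _), hnorm, integral_const, probReal_univ,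
      one_smul, zero_add] at h
  have hLg := log_integral_exp_mem_Icc (D := D) hg_int hnorm
    (hΩQ.mono fun y hy => by linarith [(hg y hy).2, hLf.1])
  exact ⟨fun x hx => abs_le_of_add_mem_Icc (hf x hx) hLg,
    fun y hy => abs_le_of_add_mem_Icc (hg y hy) hLf⟩

/-- if `(f,g)` are optimal entropic potentials for compactly supported
`(P,Q)` normalized by `∫ g dQ = 0`, then `sup_Ω |f| ≤ ½ D_Ω²` and `sup_Ω |g| ≤ ½ D_Ω²`. -/
theorem potential_uniform_bound {d : ℕ} (Ω : Set (Euc d)) (hΩ : IsCompact Ω)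
    (P Q : Measure (Euc d)) [IsProbabilityMeasure P] [IsProbabilityMeasure Q]
    (hP : P Ωᶜ = 0) (hQ : Q Ωᶜ = 0)
    (f g : Euc d → ℝ) (hpot : IsPotPair 1 P Q f g)
    (hnorm : ∫ y, g y ∂Q = 0) :
    (∀ x ∈ Ω, |f x| ≤ (1/2) * Metric.diam Ω ^ 2) ∧
    (∀ y ∈ Ω, |g y| ≤ (1/2) * Metric.diam Ω ^ 2) :=
  potential_uniform_bound_general Ω hΩ P Q hP hQ f g hpot hnorm
end
end

section
/- Let Ω ⊂ ℝ^d be compact, let P, Q, P' be probability measures supported in Ω, let (f*, g*) be optimal entropic potentials for (P,Q) and (f', g') be optimal entropic potentials for (P',Q). Set h*(x,y) = f*(x)+g*(y), h'(x,y) = f'(x)+g'(y), and let π* be the probability measure dπ*(x,y) = exp(h*(x,y) − ½‖x−y‖²) dP(x) dQ(y). Then L(h') − L(h*) ≤ −½ · ‖h' − h*‖²_{L²(π*)} · exp(−‖h' − h*‖_{∞,Ω×Ω}), where ‖h‖²_{L²(π*)} = ∫ h² dπ*. -/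
open MeasureTheory ProbabilityTheory Filter
open scoped ENNReal NNReal Topology

noncomputable section

/-!
Write `u = h' - h*`. The Schrödinger equations for `(f*, g*)` say that `π*` has marginals `P`
and `Q`, so `L(h') - L(h*) = ∫ (u - e^u + 1) dπ*`. Pointwise `e^u - 1 - u ≥ ½ u² e^{-|u|}`, and
`|u| ≤ ‖u‖_{∞,Ω×Ω}` on the support of `π*`. All integrals are finite because optimal potentials
are continuous: `f*(x) = -log ∫ exp (g*(y) - ½‖x - y‖²) dQ(y)` with `Q` compactly supported.
-/

namespace Real

theorem half_sq_mul_exp_neg_abs_le (t : ℝ) : 1 / 2 * t ^ 2 * exp (-|t|) ≤ exp t - 1 - t := by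
  rcases le_or_gt 0 t with ht | ht
  · rw [abs_of_nonneg ht]
    have h₁ : 1 + t + t ^ 2 / 2 ≤ exp t := quadratic_le_exp_of_nonneg ht
    have h₂ : exp (-t) ≤ 1 := exp_le_one_iff.mpr (neg_nonpos.mpr ht)
    nlinarith [exp_pos (-t)]
  · -- with `s = -t`, multiplying by `exp s` turns the claim into `s ^ 2 / 2 ≤ 1 + (s - 1) * exp s`
    obtain ⟨s, hs, rfl⟩ : ∃ s, 0 < s ∧ t = -s := ⟨-t, by linarith, by ring⟩
    rw [abs_neg, abs_of_pos hs]
    have hinv : exp (-s) * exp s = 1 := by rw [← exp_add]; simp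
    suffices key : s ^ 2 / 2 ≤ 1 + (s - 1) * exp s by
      nlinarith [mul_le_mul_of_nonneg_left key (exp_pos (-s)).le]
    rcases le_or_gt s 1 with hs₁ | hs₁
    · have hb := exp_bound' hs.le hs₁ (by norm_num : 0 < 3)
      simp only [Finset.sum_range_succ, Finset.sum_range_zero, Nat.factorial] at hb
      norm_num at hb
      nlinarith
    · nlinarith [quadratic_le_exp_of_nonneg hs.le]

theorem sub_exp_add_one_le_of_abs_le {t S : ℝ} (h : |t| ≤ S) :
    t - exp t + 1 ≤ -(1 / 2) * t ^ 2 * exp (-S) := by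
  have h₁ : exp (-S) ≤ exp (-|t|) := exp_le_exp.mpr (neg_le_neg h)
  nlinarith [half_sq_mul_exp_neg_abs_le t, mul_le_mul_of_nonneg_left h₁ (sq_nonneg t)]

end Real

section Potentials

open Real

variable {X : Type*} [TopologicalSpace X] [MeasurableSpace X]
  {μ : Measure X} {K : Set X} {c : X × X → ℝ} {f g : X → ℝ}

theorem Continuous.integrable_of_measure_compl_eq_zero [OpensMeasurableSpace X]
    [IsFiniteMeasure μ] (hK : IsCompact K) (hμ : μ Kᶜ = 0) {φ : X → ℝ} (hφ : Continuous φ) :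
    Integrable φ μ := by
  obtain ⟨C, hC⟩ := hK.exists_bound_of_continuousOn hφ.continuousOn
  refine (integrable_const C).mono' hφ.aestronglyMeasurable ?_
  filter_upwards [mem_ae_iff.2 hμ] with x hx using hC x hx

theorem integrable_exp_of_integrable_exp_sub_cost (hK : IsCompact K) (hμ : μ Kᶜ = 0)
    (hc : Continuous c) (hg : AEStronglyMeasurable g μ) {x₀ : X}
    (hint : Integrable (fun y => exp (g y - c (x₀, y))) μ) :
    Integrable (fun y => exp (g y)) μ := by
  obtain ⟨M, hM⟩ := hK.bddAbove_image (hc.comp (Continuous.prodMk_right x₀)).continuousOn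
  refine (hint.const_mul (exp M)).mono' (continuous_exp.comp_aestronglyMeasurable hg) ?_
  filter_upwards [mem_ae_iff.2 hμ] with y hy
  rw [norm_of_nonneg (exp_pos _).le, ← exp_add, exp_le_exp]
  linarith [show c (x₀, y) ≤ M from hM ⟨y, hy, rfl⟩]

theorem continuous_integral_exp_sub_cost [OpensMeasurableSpace X] [FirstCountableTopology X]
    (hc : Continuous c) (hc₀ : ∀ p, 0 ≤ c p) (hg : AEStronglyMeasurable g μ)
    (hint : Integrable (fun y => exp (g y)) μ) :
    Continuous fun x => ∫ y, exp (g y - c (x, y)) ∂μ := by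
  refine continuous_of_dominated (fun x => ?_) (fun x => .of_forall fun y => ?_) hint
    (.of_forall fun y => by fun_prop)
  · exact continuous_exp.comp_aestronglyMeasurable
      (hg.sub (hc.comp (Continuous.prodMk_right x)).aestronglyMeasurable)
  · rw [norm_of_nonneg (exp_pos _).le, exp_le_exp]
    linarith [hc₀ (x, y)]

theorem continuous_of_integral_exp_add_sub_cost_eq_one [OpensMeasurableSpace X]
    [FirstCountableTopology X] (hK : IsCompact K) (hμ : μ Kᶜ = 0) (hc : Continuous c)
    (hc₀ : ∀ p, 0 ≤ c p) (hg : AEStronglyMeasurable g μ)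
    (H : ∀ x, ∫ y, exp (f x + g y - c (x, y)) ∂μ = 1) :
    Continuous f := by
  have hG : ∀ x, ∫ y, exp (g y - c (x, y)) ∂μ = exp (-f x) := fun x => by
    rw [exp_neg]
    refine eq_inv_of_mul_eq_one_left ?_
    rw [← integral_mul_const, ← H x]
    congr 1 with y
    rw [← exp_add]
    ring_nf
  have hint : ∀ x, Integrable (fun y => exp (g y - c (x, y))) μ := fun x => by
    by_contra h
    exact (exp_pos (-f x)).ne' ((hG x).symm.trans (integral_undef h))
  rw [continuous_iff_continuousAt]
  intro x₀
  have hGc := continuous_integral_exp_sub_cost hc hc₀ hg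
    (integrable_exp_of_integrable_exp_sub_cost hK hμ hc hg (hint x₀))
  have hf : f = fun x => -log (∫ y, exp (g y - c (x, y)) ∂μ) := funext fun x => by
    rw [hG, log_exp, neg_neg]
  rw [hf]
  exact (hGc.log fun x => by rw [hG]; exact (exp_pos _).ne').neg.continuousAt

end Potentials

namespace IsPotPair

variable {d : ℕ} {ε : ℝ} {Ω : Set (Euc d)} {P Q : Measure (Euc d)} {f g : Euc d → ℝ}

theorem continuous_left (hpot : IsPotPair ε P Q f g) (hε : 0 < ε) (hΩ : IsCompact Ω)
    (hQ : Q Ωᶜ = 0) : Continuous f := by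
  have hf : Continuous fun x => f x / ε :=
    continuous_of_integral_exp_add_sub_cost_eq_one (c := fun p => 1 / 2 * ‖p.1 - p.2‖ ^ 2 / ε)
      hΩ hQ (by fun_prop) (fun _ => by positivity)
      (hpot.2.1.div_const ε).aestronglyMeasurable fun x => by
        simpa only [add_div, sub_div] using hpot.2.2.1 x
  simpa only [mul_div_cancel₀ _ hε.ne'] using hf.const_mul ε

theorem continuous_right (hpot : IsPotPair ε P Q f g) (hε : 0 < ε) (hΩ : IsCompact Ω)
    (hP : P Ωᶜ = 0) : Continuous g := by
  have hg : Continuous fun y => g y / ε :=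
    continuous_of_integral_exp_add_sub_cost_eq_one (c := fun p => 1 / 2 * ‖p.2 - p.1‖ ^ 2 / ε)
      hΩ hP (by fun_prop) (fun _ => by positivity)
      (hpot.1.div_const ε).aestronglyMeasurable fun y => by
        simpa only [add_div, sub_div, add_comm (g y / ε)] using hpot.2.2.2 y
  simpa only [mul_div_cancel₀ _ hε.ne'] using hg.const_mul ε

end IsPotPair

section Marginals

variable {α β : Type*} [MeasurableSpace α] [MeasurableSpace β] {μ : Measure α} {ν : Measure β}
  {r : α × β → ℝ}

theorem measure_prod_compl_prod_eq_zero [SFinite ν] {s : Set α} {t : Set β} (hs : μ sᶜ = 0)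
    (ht : ν tᶜ = 0) : μ.prod ν (s ×ˢ t)ᶜ = 0 := by
  rw [Set.compl_prod_eq_union]
  refine measure_union_null ?_ ?_
  · rw [Measure.prod_prod, hs, zero_mul]
  · rw [Measure.prod_prod, ht, mul_zero]

theorem integral_mul_comp_fst_of_integral_eq_one [SFinite μ] [SFinite ν]
    (hr : ∀ x, ∫ y, r (x, y) ∂ν = 1) {φ : α → ℝ}
    (hφ : Integrable (fun p => r p * φ p.1) (μ.prod ν)) :
    ∫ p, r p * φ p.1 ∂μ.prod ν = ∫ x, φ x ∂μ := by
  rw [integral_prod _ hφ]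
  congr 1 with x
  dsimp only
  rw [integral_mul_const, hr x, one_mul]

theorem integral_mul_comp_snd_of_integral_eq_one [SFinite μ] [SFinite ν]
    (hr : ∀ y, ∫ x, r (x, y) ∂μ = 1) {φ : β → ℝ}
    (hφ : Integrable (fun p => r p * φ p.2) (μ.prod ν)) :
    ∫ p, r p * φ p.2 ∂μ.prod ν = ∫ y, φ y ∂ν := by
  rw [integral_prod_symm _ hφ]
  congr 1 with y
  dsimp only
  rw [integral_mul_const, hr y, one_mul]

theorem integral_withDensity_ofReal {r : α → ℝ} (hr : Measurable r) (hr₀ : ∀ x, 0 ≤ r x)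
    (φ : α → ℝ) :
    ∫ x, φ x ∂μ.withDensity (fun x => ENNReal.ofReal (r x)) = ∫ x, r x * φ x ∂μ := by
  rw [integral_withDensity_eq_integral_toReal_smul hr.ennreal_ofReal
    (.of_forall fun _ => ENNReal.ofReal_lt_top)]
  congr 1 with x
  rw [ENNReal.toReal_ofReal (hr₀ x), smul_eq_mul]

end Marginals

section DualGap

open Real

variable {d : ℕ} {Ω : Set (Euc d)} {P Q : Measure (Euc d)} {f g f' g' : Euc d → ℝ}

/-- The density `dπ / d(P ⊗ Q)` of the entropic plan `π` of the potentials `(f, g)`. -/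
def gibbsDensity (f g : Euc d → ℝ) (p : Euc d × Euc d) : ℝ :=
  exp (f p.1 + g p.2 - 1 / 2 * ‖p.1 - p.2‖ ^ 2)

theorem dualL_eq_integral_gibbsDensity (P Q : Measure (Euc d)) (f g : Euc d → ℝ) :
    dualL P Q f g = ∫ x, f x ∂P + ∫ y, g y ∂Q - ∫ p, gibbsDensity f g p ∂P.prod Q + 1 := rfl

theorem continuous_gibbsDensity (hf : Continuous f) (hg : Continuous g) :
    Continuous (gibbsDensity f g) := by
  unfold gibbsDensity
  fun_prop

theorem gibbsDensity_eq_mul_exp (p : Euc d × Euc d) :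
    gibbsDensity f' g' p = gibbsDensity f g p * exp (f' p.1 + g' p.2 - (f p.1 + g p.2)) := by
  rw [gibbsDensity, gibbsDensity, ← exp_add]
  ring_nf

theorem dualL_sub_dualL_eq_integral [IsProbabilityMeasure P] [IsProbabilityMeasure Q]
    (hΩ : IsCompact Ω) (hP : P Ωᶜ = 0) (hQ : Q Ωᶜ = 0) (hf : Continuous f) (hg : Continuous g)
    (hf' : Continuous f') (hg' : Continuous g') (h₁ : ∀ x, ∫ y, gibbsDensity f g (x, y) ∂Q = 1)
    (h₂ : ∀ y, ∫ x, gibbsDensity f g (x, y) ∂P = 1) :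
    dualL P Q f' g' - dualL P Q f g =
      ∫ p, gibbsDensity f g p * (f' p.1 + g' p.2 - (f p.1 + g p.2)
        - exp (f' p.1 + g' p.2 - (f p.1 + g p.2)) + 1) ∂P.prod Q := by
  have hI : ∀ {φ : Euc d × Euc d → ℝ}, Continuous φ → Integrable φ (P.prod Q) := fun hφ =>
    hφ.integrable_of_measure_compl_eq_zero (hΩ.prod hΩ) (measure_prod_compl_prod_eq_zero hP hQ)
  have hIΩ : ∀ {μ : Measure (Euc d)} [IsFiniteMeasure μ] {φ : Euc d → ℝ}, μ Ωᶜ = 0 →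
      Continuous φ → Integrable φ μ := fun hμ hφ => hφ.integrable_of_measure_compl_eq_zero hΩ hμ
  have hr := continuous_gibbsDensity hf hg
  have hmass : ∫ p, gibbsDensity f g p ∂P.prod Q = 1 := by
    have h := integral_mul_comp_fst_of_integral_eq_one h₁ (φ := fun _ => (1 : ℝ))
      (by simpa using hI hr)
    simp only [mul_one, integral_const, smul_eq_mul] at h
    rwa [probReal_univ] at h
  have hfst : ∫ p, gibbsDensity f g p * (f' p.1 - f p.1) ∂P.prod Q =
      ∫ x, f' x ∂P - ∫ x, f x ∂P := by
    rw [integral_mul_comp_fst_of_integral_eq_one h₁ (φ := fun x => f' x - f x) (hI (by fun_prop)),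
      integral_sub (hIΩ hP hf') (hIΩ hP hf)]
  have hsnd : ∫ p, gibbsDensity f g p * (g' p.2 - g p.2) ∂P.prod Q =
      ∫ y, g' y ∂Q - ∫ y, g y ∂Q := by
    rw [integral_mul_comp_snd_of_integral_eq_one h₂ (φ := fun y => g' y - g y) (hI (by fun_prop)),
      integral_sub (hIΩ hQ hg') (hIΩ hQ hg)]
  have hexp : ∫ p, gibbsDensity f' g' p ∂P.prod Q =
      ∫ p, gibbsDensity f g p * exp (f' p.1 + g' p.2 - (f p.1 + g p.2)) ∂P.prod Q :=
    integral_congr_ae (.of_forall gibbsDensity_eq_mul_exp)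
  have hA : Integrable (fun p => gibbsDensity f g p * (f' p.1 - f p.1)) (P.prod Q) :=
    hI (by fun_prop)
  have hB : Integrable (fun p => gibbsDensity f g p * (g' p.2 - g p.2)) (P.prod Q) :=
    hI (by fun_prop)
  have hC : Integrable (fun p => gibbsDensity f g p * exp (f' p.1 + g' p.2 - (f p.1 + g p.2)))
      (P.prod Q) := hI (by fun_prop)
  calc dualL P Q f' g' - dualL P Q f g
      = ∫ p, gibbsDensity f g p * (f' p.1 - f p.1) ∂P.prod Q
        + ∫ p, gibbsDensity f g p * (g' p.2 - g p.2) ∂P.prod Q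
        - ∫ p, gibbsDensity f g p * exp (f' p.1 + g' p.2 - (f p.1 + g p.2)) ∂P.prod Q
        + ∫ p, gibbsDensity f g p ∂P.prod Q := by
        rw [hfst, hsnd, ← hexp, hmass, dualL_eq_integral_gibbsDensity,
          dualL_eq_integral_gibbsDensity, hmass]
        ring
    _ = _ := by
      rw [← integral_add hA hB, ← integral_sub ?_ hC, ← integral_add ?_ (hI hr)]
      · congr 1 with p
        ring
      exacts [(hA.add hB).sub hC, hA.add hB]

end DualGap

theorem abs_le_supOn {X : Type*} [TopologicalSpace X] {K : Set X} (hK : IsCompact K)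
    {φ : X → ℝ} (hφ : Continuous φ) {x : X} (hx : x ∈ K) : |φ x| ≤ supOn K φ :=
  le_csSup (hK.image hφ.abs).bddAbove (Set.mem_image_of_mem _ hx)

theorem dual_strong_concavity_general {d : ℕ} (Ω : Set (Euc d)) (hΩ : IsCompact Ω)
    (P Q P' : Measure (Euc d))
    [IsProbabilityMeasure P] [IsProbabilityMeasure Q]
    (hP : P Ωᶜ = 0) (hQ : Q Ωᶜ = 0) (hP' : P' Ωᶜ = 0)
    (fs gs f' g' : Euc d → ℝ)
    (hpot : IsPotPair 1 P Q fs gs) (hpot' : IsPotPair 1 P' Q f' g') :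
    dualL P Q f' g' - dualL P Q fs gs ≤
      -(1/2) * (∫ p : Euc d × Euc d,
            (f' p.1 + g' p.2 - (fs p.1 + gs p.2))^2
          ∂((P.prod Q).withDensity fun p =>
              ENNReal.ofReal (Real.exp (fs p.1 + gs p.2 - (1/2) * ‖p.1 - p.2‖^2)))) *
        Real.exp (-(supOn (Ω ×ˢ Ω)
          fun p : Euc d × Euc d => f' p.1 + g' p.2 - (fs p.1 + gs p.2))) := by
  have hfs := hpot.continuous_left one_pos hΩ hQ
  have hgs := hpot.continuous_right one_pos hΩ hP
  have hf' := hpot'.continuous_left one_pos hΩ hQ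
  have hg' := hpot'.continuous_right one_pos hΩ hP'
  have hr := continuous_gibbsDensity hfs hgs
  set u : Euc d × Euc d → ℝ := fun p => f' p.1 + g' p.2 - (fs p.1 + gs p.2)
  set S := supOn (Ω ×ˢ Ω) u
  have hΩΩ := measure_prod_compl_prod_eq_zero hP hQ
  have hI : ∀ {φ : Euc d × Euc d → ℝ}, Continuous φ → Integrable φ (P.prod Q) := fun hφ =>
    hφ.integrable_of_measure_compl_eq_zero (hΩ.prod hΩ) hΩΩ
  rw [dualL_sub_dualL_eq_integral hΩ hP hQ hfs hgs hf' hg'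
    (by simpa only [div_one, gibbsDensity] using hpot.2.2.1)
    (by simpa only [div_one, gibbsDensity] using hpot.2.2.2)]
  calc ∫ p, gibbsDensity fs gs p * (u p - Real.exp (u p) + 1) ∂P.prod Q
      ≤ ∫ p, gibbsDensity fs gs p * (-(1 / 2) * u p ^ 2 * Real.exp (-S)) ∂P.prod Q := by
        refine integral_mono_ae (hI (by fun_prop)) (hI (by fun_prop)) ?_
        filter_upwards [mem_ae_iff.2 hΩΩ] with p hp
        exact mul_le_mul_of_nonneg_left
          (Real.sub_exp_add_one_le_of_abs_le (abs_le_supOn (hΩ.prod hΩ) (by fun_prop) hp))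
          (Real.exp_pos _).le
    _ = -(1 / 2) * (∫ p, gibbsDensity fs gs p * u p ^ 2 ∂P.prod Q) * Real.exp (-S) := by
      rw [← integral_const_mul, ← integral_mul_const]
      congr 1 with p
      ring
    _ = -(1 / 2) * (∫ p, u p ^ 2 ∂(P.prod Q).withDensity
          fun p => ENNReal.ofReal (gibbsDensity fs gs p)) * Real.exp (-S) := by
      rw [integral_withDensity_ofReal hr.measurable fun _ => (Real.exp_pos _).le]

/-- strong concavity of the dual functional near its maximum:
`L(h') − L(h*) ≤ −½ ‖h' − h*‖²_{L²(π*)} e^{−‖h' − h*‖_{∞,Ω×Ω}}`. -/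
theorem dual_strong_concavity {d : ℕ} (Ω : Set (Euc d)) (hΩ : IsCompact Ω)
    (P Q P' : Measure (Euc d))
    [IsProbabilityMeasure P] [IsProbabilityMeasure Q] [IsProbabilityMeasure P']
    (hP : P Ωᶜ = 0) (hQ : Q Ωᶜ = 0) (hP' : P' Ωᶜ = 0)
    (fs gs f' g' : Euc d → ℝ)
    (hpot : IsPotPair 1 P Q fs gs) (hpot' : IsPotPair 1 P' Q f' g') :
    dualL P Q f' g' - dualL P Q fs gs ≤
      -(1/2) * (∫ p : Euc d × Euc d,
            (f' p.1 + g' p.2 - (fs p.1 + gs p.2))^2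
          ∂((P.prod Q).withDensity fun p =>
              ENNReal.ofReal (Real.exp (fs p.1 + gs p.2 - (1/2) * ‖p.1 - p.2‖^2)))) *
        Real.exp (-(supOn (Ω ×ˢ Ω)
          fun p : Euc d × Euc d => f' p.1 + g' p.2 - (fs p.1 + gs p.2))) :=
  dual_strong_concavity_general Ω hΩ P Q P' hP hQ hP' fs gs f' g' hpot hpot'
end
end
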